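/- For any string S, FP(S)[i] equals the in-degree of node i in the DAG G(S) whose vertex set is {1,...,|S|} and which has an edge (j, i) whenever j = i - PD(S)[i] and PD(S)[i] > 0. -/

import Mathlib

open List

inductive Shape where
  | nil : Shape
  | node : Shape → Shape → Shape
deriving DecidableEq

inductive BTree (α : Type*) where
  | nil : BTree α
  | node : BTree α → α → BTree α → BTree α

def BTree.shape {α : Type*} : BTree α → Shape
  | .nil => .nil
  | .node l _ r => .node l.shape r.shape

def BTree.rootVal {α : Type*} : BTree α → Option α
  | .nil => none
  | .node _ v _ => some v

section
variable {α : Type*} [LinearOrder α] [Inhabited α]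

/-- Parent-distance value at 1-based position `i` of `S`. -/
def pdVal (S : List α) (i : ℕ) : ℕ :=
  let J := (Finset.Ico 1 i).filter (fun j => S.getD (j-1) default ≤ S.getD (i-1) default)
  if h : J.Nonempty then i - J.max' h else 0

/-- Parent-distance encoding of `S` (1-based positions). -/
def PD (S : List α) : List ℕ := (List.range S.length).map (fun k => pdVal S (k+1))

/-- 0-based index of the leftmost minimum of `S`. -/
def leftmostMinIdx (S : List α) : ℕ :=
  ((List.range S.length).argmin (fun j => S.getD j default)).getD 0

def CTaux : ℕ → List α → BTree α
  | 0, _ => .nil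
  | (n+1), S =>
    if S.isEmpty then .nil else
      let i := leftmostMinIdx S
      .node (CTaux n (S.take i)) (S.getD i default) (CTaux n (S.drop (i+1)))

/-- The (labeled) Cartesian tree of `S`. -/
def CT (S : List α) : BTree α := CTaux S.length S

/-- Front pointers of a sequence `u` of naturals (1-based positions `k ≥ 2` with `k - u[k] = 1`). -/
def frontPointers (u : List ℕ) : Finset ℕ :=
  (Finset.Icc 2 u.length).filter (fun k => k - u.getD (k-1) 0 = 1)

/-- `FP(S)[i]`: number of front pointers of `PD(S[i..])` (1-based `i`). -/
def FPval (S : List α) (i : ℕ) : ℕ := (frontPointers (PD (S.drop (i-1)))).card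

/-- The FP encoding of `S`. -/
def FP (S : List α) : List ℕ := (List.range S.length).map (fun k => FPval S (k+1))

end

/-!
A front pointer `k` of `PD(S[i..])` is a position whose nearest earlier letter `≤ S[i..][k]` is
the first letter of the suffix. Whether `j` is this nearest letter for `m` only depends on the
letters from `j` to `m`, so the front pointers of `PD(S[i..])`, shifted by `i - 1`, are exactly
the positions `m` with `m - PD(S)[m] = i`.
-/

theorem List.getD_drop {α : Type*} (S : List α) (n a : ℕ) (d : α) :
    (S.drop n).getD a d = S.getD (n + a) d := by
  simp [List.getD_eq_getElem?_getD, List.getElem?_drop]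

section
variable {α : Type*} [LinearOrder α] [Inhabited α]

/-- `(j, m)` is an edge of the DAG `G(S)`. -/
def IsPDParent (S : List α) (j m : ℕ) : Prop :=
  0 < pdVal S m ∧ m - pdVal S m = j

instance (S : List α) (j m : ℕ) : Decidable (IsPDParent S j m) :=
  inferInstanceAs (Decidable (_ ∧ _))

theorem isPDParent_iff (S : List α) (j m : ℕ) :
    IsPDParent S j m ↔
      1 ≤ j ∧ j < m ∧ S.getD (j-1) default ≤ S.getD (m-1) default ∧
        ∀ k, j < k → k < m → S.getD (m-1) default < S.getD (k-1) default := by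
  unfold IsPDParent pdVal
  dsimp only
  set J := (Finset.Ico 1 m).filter
    (fun k => S.getD (k-1) default ≤ S.getD (m-1) default) with hJ
  have mem_J : ∀ k, k ∈ J ↔ (1 ≤ k ∧ k < m) ∧ S.getD (k-1) default ≤ S.getD (m-1) default := by
    simp [hJ]
  by_cases hne : J.Nonempty
  · obtain ⟨⟨hM1, hMm⟩, -⟩ := (mem_J _).1 (J.max'_mem hne)
    rw [dif_pos hne]
    calc (0 < m - J.max' hne ∧ m - (m - J.max' hne) = j) ↔ J.max' hne = j := by omega
      _ ↔ _ := by
        simp only [Finset.max'_eq_iff, mem_J]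
        constructor
        · rintro ⟨⟨⟨hj1, hjm⟩, hle⟩, hmax⟩
          refine ⟨hj1, hjm, hle, fun k hjk hkm => lt_of_not_ge fun hk => ?_⟩
          exact absurd (hmax k ⟨⟨by omega, hkm⟩, hk⟩) (by omega)
        · rintro ⟨hj1, hjm, hle, hmin⟩
          refine ⟨⟨⟨hj1, hjm⟩, hle⟩, fun k ⟨⟨_, hkm⟩, hk⟩ => le_of_not_gt fun hjk => ?_⟩
          exact absurd hk (not_le.2 (hmin k hjk hkm))
  · rw [dif_neg hne]
    refine ⟨fun h => (lt_irrefl 0 h.1).elim, ?_⟩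
    rintro ⟨hj1, hjm, hle, -⟩
    exact absurd ⟨j, (mem_J j).2 ⟨⟨hj1, hjm⟩, hle⟩⟩ hne

theorem isPDParent_drop_iff (S : List α) (n : ℕ) {j k : ℕ} (hj : 1 ≤ j) :
    IsPDParent (S.drop n) j k ↔ IsPDParent S (j + n) (k + n) := by
  simp only [isPDParent_iff, List.getD_drop]
  by_cases hjk : j < k
  · have ej : j + n - 1 = n + (j - 1) := by omega
    have ek : k + n - 1 = n + (k - 1) := by omega
    rw [ej, ek]
    refine and_congr (iff_of_true hj (by omega)) (and_congr (iff_of_true hjk (by omega)) ?_)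
    refine and_congr_right fun _ => ⟨fun hmin l hjl hlk => ?_, fun hmin l hjl hlk => ?_⟩
    · have := hmin (l - n) (by omega) (by omega)
      rwa [show n + (l - n - 1) = l - 1 by omega] at this
    · have := hmin (l + n) (by omega) (by omega)
      rwa [show l + n - 1 = n + (l - 1) by omega] at this
  · exact iff_of_false (by omega) (by omega)

theorem IsPDParent.lt {S : List α} {j m : ℕ} (h : IsPDParent S j m) : j < m :=
  ((isPDParent_iff S j m).1 h).2.1

theorem length_PD (S : List α) : (PD S).length = S.length := by
  simp [PD]

theorem PD_getD (S : List α) {k : ℕ} (hk : 1 ≤ k) (hkS : k ≤ S.length) :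
    (PD S).getD (k - 1) 0 = pdVal S k := by
  have hk' : k - 1 + 1 = k := by omega
  simp [PD, List.getD_eq_getElem?_getD, show k - 1 < S.length by omega, hk']

def pdInNeighbors (S : List α) (j : ℕ) : Finset ℕ :=
  (Finset.Icc 1 S.length).filter (IsPDParent S j)

theorem frontPointers_PD (S : List α) : frontPointers (PD S) = pdInNeighbors S 1 := by
  ext k
  simp only [frontPointers, pdInNeighbors, Finset.mem_filter, Finset.mem_Icc, length_PD]
  constructor
  · rintro ⟨⟨h2k, hkS⟩, hk⟩
    rw [PD_getD S (by omega) hkS] at hk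
    exact ⟨⟨by omega, hkS⟩, by unfold IsPDParent; omega⟩
  · rintro ⟨⟨h1k, hkS⟩, hP⟩
    have := hP.lt
    refine ⟨⟨this, hkS⟩, ?_⟩
    rw [PD_getD S h1k hkS]
    unfold IsPDParent at hP
    omega

theorem pdInNeighbors_drop (S : List α) (n : ℕ) {j : ℕ} (hj : 1 ≤ j) :
    (pdInNeighbors (S.drop n) j).map (addRightEmbedding n) = pdInNeighbors S (j + n) := by
  ext m
  simp only [pdInNeighbors, Finset.mem_map, Finset.mem_filter, Finset.mem_Icc, List.length_drop,
    addRightEmbedding_apply, isPDParent_drop_iff S n hj]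
  constructor
  · rintro ⟨k, ⟨hk, hP⟩, rfl⟩
    exact ⟨by have := hP.lt; omega, hP⟩
  · rintro ⟨⟨-, hm⟩, hP⟩
    have := hP.lt
    refine ⟨m - n, ⟨by omega, ?_⟩, by omega⟩
    rwa [Nat.sub_add_cancel (by omega)]

end

theorem stmt9_general {α : Type*} [LinearOrder α] [Inhabited α] (S : List α) (i : ℕ)
    (h1 : 1 ≤ i) :
    FPval S i =
      ((Finset.Icc 1 S.length).filter
        (fun k => 0 < pdVal S k ∧ k - pdVal S k = i)).card := by
  obtain ⟨n, rfl⟩ : ∃ n, i = 1 + n := ⟨i - 1, by omega⟩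
  rw [FPval, Nat.add_sub_cancel_left, frontPointers_PD,
    ← Finset.card_map (addRightEmbedding n), pdInNeighbors_drop S n le_rfl]
  rfl

/-- `FP(S)[i]` equals the in-degree of node `i` in the DAG `G(S)` with edges
`(i - PD(S)[i], i)` for `PD(S)[i] > 0`. -/
theorem stmt9 {α : Type*} [LinearOrder α] [Inhabited α] (S : List α) (i : ℕ)
    (h1 : 1 ≤ i) (h2 : i ≤ S.length) :
    FPval S i =
      ((Finset.Icc 1 S.length).filter
        (fun k => 0 < pdVal S k ∧ k - pdVal S k = i)).card :=
  stmt9_general S i h1
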